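/- In ℤ[c₁, c₂, c₃, c₄], consider the four polynomials obtained from the αᵢ relations with n = 4, k = 1: α₁(c₁), α₂(c₁), α₃(c₁), α₄(c₁) with α₁(H) = 4H - 2c₁, α₂(H) = 6H² - 3c₁H, α₃(H) = 4H³ - 3c₁H² + 2c₂H - 2c₃, α₄(H) = H⁴ - c₁H³ + c₂H² - c₃H. The ideal they generate equals (2c₁, c₁², 2c₃, c₁c₃). -/
import Mathlib


open Polynomial

/-- In ℤ[c₁,c₂,c₃,c₄], with α₁(H) = 4H - 2c₁, α₂(H) = 6H² - 3c₁H,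
α₃(H) = 4H³ - 3c₁H² + 2c₂H - 2c₃, α₄(H) = H⁴ - c₁H³ + c₂H² - c₃H (the n = 4, k = 1
relations), the ideal generated by α₁(c₁), α₂(c₁), α₃(c₁), α₄(c₁) equals
(2c₁, c₁², 2c₃, c₁c₃). -/
theorem stmt13 :
    let R := MvPolynomial (Fin 4) ℤ
    let c1 : R := MvPolynomial.X 0
    let c2 : R := MvPolynomial.X 1
    let c3 : R := MvPolynomial.X 2
    let α1 : Polynomial R := C 4 * X - C (2 * c1)
    let α2 : Polynomial R := C 6 * X ^ 2 - C (3 * c1) * X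
    let α3 : Polynomial R := C 4 * X ^ 3 - C (3 * c1) * X ^ 2 + C (2 * c2) * X - C (2 * c3)
    let α4 : Polynomial R := X ^ 4 - C c1 * X ^ 3 + C c2 * X ^ 2 - C c3 * X
    Ideal.span {Polynomial.eval c1 α1, Polynomial.eval c1 α2,
        Polynomial.eval c1 α3, Polynomial.eval c1 α4} =
      Ideal.span {2 * c1, c1 ^ 2, 2 * c3, c1 * c3} := by
  intro R c1 c2 c3 α1 α2 α3 α4
  have e1 : Polynomial.eval c1 α1 = 2 * c1 := by simp [α1]; ring
  have e2 : Polynomial.eval c1 α2 = 3 * c1 ^ 2 := by simp [α2]; ring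
  have e3 : Polynomial.eval c1 α3 = c1 ^ 3 + 2 * c1 * c2 - 2 * c3 := by simp [α3]; ring
  have e4 : Polynomial.eval c1 α4 = c1 ^ 2 * c2 - c1 * c3 := by simp [α4]; ring
  rw [e1, e2, e3, e4]
  apply le_antisymm <;> rw [Ideal.span_le] <;>
    simp only [Set.insert_subset_iff, Set.singleton_subset_iff, SetLike.mem_coe]
  · refine ⟨Ideal.subset_span (by simp), ?_, ?_, ?_⟩
    · have h : (3 : R) * c1 ^ 2 = 3 * c1 ^ 2 := rfl
      exact Ideal.mul_mem_left _ 3 (Ideal.subset_span (by simp))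
    · have ha : (2 : R) * c1 ∈ Ideal.span {2 * c1, c1 ^ 2, 2 * c3, c1 * c3} :=
        Ideal.subset_span (by simp)
      have hb : (c1 : R) ^ 2 ∈ Ideal.span {2 * c1, c1 ^ 2, 2 * c3, c1 * c3} :=
        Ideal.subset_span (by simp)
      have hc : (2 : R) * c3 ∈ Ideal.span {2 * c1, c1 ^ 2, 2 * c3, c1 * c3} :=
        Ideal.subset_span (by simp)
      have : c1 ^ 3 + 2 * c1 * c2 - 2 * c3
          = c1 * c1 ^ 2 + c2 * (2 * c1) - 2 * c3 := by ring
      rw [this]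
      exact Ideal.sub_mem _ (Ideal.add_mem _ (Ideal.mul_mem_left _ _ hb)
        (Ideal.mul_mem_left _ _ ha)) hc
    · have hd : (c1 : R) * c3 ∈ Ideal.span {2 * c1, c1 ^ 2, 2 * c3, c1 * c3} :=
        Ideal.subset_span (by simp)
      have hb : (c1 : R) ^ 2 ∈ Ideal.span {2 * c1, c1 ^ 2, 2 * c3, c1 * c3} :=
        Ideal.subset_span (by simp)
      exact Ideal.sub_mem _ (Ideal.mul_mem_right _ _ hb) hd
  · set S : Set R := {2 * c1, 3 * c1 ^ 2, c1 ^ 3 + 2 * c1 * c2 - 2 * c3, c1 ^ 2 * c2 - c1 * c3}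
    have ha : (2 : R) * c1 ∈ Ideal.span S := Ideal.subset_span (by simp [S])
    have hb : (3 : R) * c1 ^ 2 ∈ Ideal.span S := Ideal.subset_span (by simp [S])
    have hc : c1 ^ 3 + 2 * c1 * c2 - 2 * c3 ∈ Ideal.span S := Ideal.subset_span (by simp [S])
    have hd : c1 ^ 2 * c2 - c1 * c3 ∈ Ideal.span S := Ideal.subset_span (by simp [S])
    have hsq : (c1 : R) ^ 2 ∈ Ideal.span S := by
      have : (c1 : R) ^ 2 = 3 * c1 ^ 2 - c1 * (2 * c1) := by ring
      rw [this]
      exact Ideal.sub_mem _ hb (Ideal.mul_mem_left _ _ ha)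
    refine ⟨ha, hsq, ?_, ?_⟩
    · have : (2 : R) * c3 = c1 * c1 ^ 2 + c2 * (2 * c1) - (c1 ^ 3 + 2 * c1 * c2 - 2 * c3) := by
        ring
      rw [this]
      exact Ideal.sub_mem _ (Ideal.add_mem _ (Ideal.mul_mem_left _ _ hsq)
        (Ideal.mul_mem_left _ _ ha)) hc
    · have : (c1 : R) * c3 = c2 * c1 ^ 2 - (c1 ^ 2 * c2 - c1 * c3) := by ring
      rw [this]
      exact Ideal.sub_mem _ (Ideal.mul_mem_left _ _ hsq) hd
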